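/- Let n ≥ 1, m > 0 and 0 < θ ≤ 1, and let u₁ ∈ L^{1,θ}(ℝⁿ). Define A(ξ) = ∫_{ℝⁿ} (cos(x·ξ) − 1) u₁(x) dx and B(ξ) = ∫_{ℝⁿ} sin(x·ξ) u₁(x) dx. Then there exist δ₀ ∈ (0, δ) and a constant C > 0 depending only on n, δ₀ and θ such that for all t ≥ 1, ∫_{|ξ| ≤ δ₀} (|A(ξ)| + |B(ξ)|)² e^{-|ξ|² t} sin²(t b(ξ))/b(ξ)² dξ ≤ C m^{-2} ‖u₁‖_{1,θ}² t^{-n/2}. -/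

import Mathlib

open MeasureTheory Real

noncomputable section

/-- Euclidean space `ℝⁿ`. -/
abbrev E (n : ℕ) := EuclideanSpace ℝ (Fin n)

/-- The Fourier transform `û₁(ξ) = ∫ e^{-i x·ξ} u₁(x) dx`. -/
def fourierT (n : ℕ) (u₁ : E n → ℝ) (ξ : E n) : ℂ :=
  ∫ x : E n, Complex.exp (-(Complex.I * ((inner ℝ x ξ : ℝ) : ℂ))) * (u₁ x : ℂ)

/-- `b(r) = (1/2)√(4r² + 4m² log(1+r^{2θ}) − r⁴)` (low frequencies). -/
def bF (m θ r : ℝ) : ℝ :=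
  Real.sqrt (4 * r ^ 2 + 4 * m ^ 2 * Real.log (1 + r ^ (2 * θ)) - r ^ 4) / 2

/-- `d(r) = (1/2)√(r⁴ − 4r² − 4m² log(1+r^{2θ}))` (high frequencies). -/
def dF (m θ r : ℝ) : ℝ :=
  Real.sqrt (r ^ 4 - 4 * r ^ 2 - 4 * m ^ 2 * Real.log (1 + r ^ (2 * θ))) / 2


/-!
Since `|cos s - 1| ≤ 2 |s|^θ` and `|sin s| ≤ |s|^θ` for `θ ∈ (0, 1]`, both `A(ξ)` and `B(ξ)`
are `O(|ξ|^θ ‖u₁‖_{1,θ})`. On `|ξ| ≤ 1` the logarithm dominates its argument,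
`log (1 + |ξ|^{2θ}) ≥ |ξ|^{2θ} / 2`, so `b(ξ)² ≥ m² |ξ|^{2θ} / 2`; the factor `|ξ|^{2θ}` cancels
and, bounding `sin²` by `1`, the integrand is at most `18 m⁻² ‖u₁‖²_{1,θ} e^{-|ξ|² t}`,
whose integral over `ℝⁿ` is `18 m⁻² ‖u₁‖²_{1,θ} (π / t)^{n/2}`. Thus `δ₀ = 1` works.
-/

section Elementary

variable {θ : ℝ}

lemma min_le_rpow_of_le_one (hθ₀ : 0 < θ) (hθ₁ : θ ≤ 1) {s : ℝ} (hs : 0 ≤ s) :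
    min s 1 ≤ s ^ θ := by
  rcases le_or_gt s 1 with h | h
  · exact (min_le_left _ _).trans (self_le_rpow_of_le_one hs h hθ₁)
  · exact (min_le_right _ _).trans (one_le_rpow h.le hθ₀.le)

lemma abs_sin_le_abs_rpow (hθ₀ : 0 < θ) (hθ₁ : θ ≤ 1) (s : ℝ) : |sin s| ≤ |s| ^ θ :=
  (le_min abs_sin_le_abs (abs_sin_le_one s)).trans (min_le_rpow_of_le_one hθ₀ hθ₁ (abs_nonneg s))

lemma abs_cos_sub_one_le_two_mul_min (s : ℝ) : |cos s - 1| ≤ 2 * min |s| 1 := by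
  rw [abs_sub_comm, abs_of_nonneg (sub_nonneg.2 (cos_le_one s))]
  rcases le_or_gt |s| 1 with h | h
  · rw [min_eq_left h]
    have hsq : s ^ 2 ≤ |s| := by nlinarith [abs_nonneg s, sq_abs s]
    linarith [one_sub_sq_div_two_le_cos (x := s), abs_nonneg s]
  · rw [min_eq_right h.le]
    linarith [neg_one_le_cos s]

lemma abs_cos_sub_one_le_two_mul_abs_rpow (hθ₀ : 0 < θ) (hθ₁ : θ ≤ 1) (s : ℝ) :
    |cos s - 1| ≤ 2 * |s| ^ θ :=
  (abs_cos_sub_one_le_two_mul_min s).trans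
    (by linarith [min_le_rpow_of_le_one hθ₀ hθ₁ (abs_nonneg s)])

lemma half_le_log_one_add {s : ℝ} (hs₀ : 0 ≤ s) (hs₂ : s ≤ 2) : s / 2 ≤ log (1 + s) := by
  refine le_trans ?_ (le_log_one_add_of_nonneg hs₀)
  rw [div_le_div_iff₀ two_pos (by linarith)]
  nlinarith

end Elementary

lemma mul_sq_rpow_div_two_le_sq_bF (m : ℝ) {θ r : ℝ} (hθ : 0 ≤ θ) (hr₀ : 0 ≤ r) (hr₁ : r ≤ 1) :
    m ^ 2 * (r ^ θ) ^ 2 / 2 ≤ bF m θ r ^ 2 := by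
  have hsq : (r ^ θ) ^ 2 = r ^ (2 * θ) := by
    rw [mul_comm, rpow_mul hr₀, rpow_two]
  have hs₁ : r ^ (2 * θ) ≤ 1 := rpow_le_one hr₀ hr₁ (by positivity)
  have hlog := half_le_log_one_add (rpow_nonneg hr₀ (2 * θ)) (by linarith)
  have hr2 : r ^ 2 ≤ 1 := by nlinarith
  have hr4 : r ^ 4 ≤ 4 * r ^ 2 := by nlinarith [mul_le_mul_of_nonneg_left hr2 (sq_nonneg r)]
  have hrad : 2 * m ^ 2 * r ^ (2 * θ) ≤ 4 * r ^ 2 + 4 * m ^ 2 * log (1 + r ^ (2 * θ)) - r ^ 4 := by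
    nlinarith [sq_nonneg m]
  rw [bF, div_pow, sq_sqrt (le_trans (by positivity) hrad), hsq]
  linarith

section Oscillatory

variable {V : Type*} [NormedAddCommGroup V] [InnerProductSpace ℝ V] [MeasurableSpace V]
  {μ : Measure V}

lemma abs_integral_comp_inner_mul_le {g : ℝ → ℝ} {c θ : ℝ} (hθ : 0 ≤ θ)
    (hg : ∀ s, |g s| ≤ c * |s| ^ θ) {u : V → ℝ}
    (hu : Integrable (fun x => (1 + ‖x‖ ^ θ) * |u x|) μ) (ξ : V) :
    |∫ x, g (inner ℝ x ξ) * u x ∂μ| ≤ c * ‖ξ‖ ^ θ * ∫ x, (1 + ‖x‖ ^ θ) * |u x| ∂μ := by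
  have hc : 0 ≤ c := by simpa using (abs_nonneg _).trans (hg 1)
  rw [← integral_const_mul]
  refine abs_integral_le_integral_abs.trans <| integral_mono_of_nonneg
    (ae_of_all _ fun x => abs_nonneg _) (hu.const_mul _) (ae_of_all _ fun x => ?_)
  have hinner : |inner ℝ x ξ| ^ θ ≤ ‖x‖ ^ θ * ‖ξ‖ ^ θ := by
    rw [← mul_rpow (norm_nonneg x) (norm_nonneg ξ)]
    exact rpow_le_rpow (abs_nonneg _) (abs_real_inner_le_norm x ξ) hθ
  have hweight : ‖x‖ ^ θ ≤ 1 + ‖x‖ ^ θ := by linarith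
  calc |g (inner ℝ x ξ) * u x| = |g (inner ℝ x ξ)| * |u x| := abs_mul _ _
    _ ≤ c * (‖x‖ ^ θ * ‖ξ‖ ^ θ) * |u x| := by
        gcongr
        exact (hg _).trans (mul_le_mul_of_nonneg_left hinner hc)
    _ ≤ c * ((1 + ‖x‖ ^ θ) * ‖ξ‖ ^ θ) * |u x| := by gcongr
    _ = c * ‖ξ‖ ^ θ * ((1 + ‖x‖ ^ θ) * |u x|) := by ring

lemma lowFrequency_integrand_le {m θ : ℝ} (hm : 0 < m) (hθ₀ : 0 < θ) (hθ₁ : θ ≤ 1)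
    {u : V → ℝ} (hu : Integrable (fun x => (1 + ‖x‖ ^ θ) * |u x|) μ) (t : ℝ) {ξ : V}
    (hξ : ‖ξ‖ ≤ 1) :
    (|∫ x, (cos (inner ℝ x ξ) - 1) * u x ∂μ| + |∫ x, sin (inner ℝ x ξ) * u x ∂μ|) ^ 2 *
        exp (-(‖ξ‖ ^ 2) * t) * sin (t * bF m θ ‖ξ‖) ^ 2 / bF m θ ‖ξ‖ ^ 2 ≤
      18 * (∫ x, (1 + ‖x‖ ^ θ) * |u x| ∂μ) ^ 2 / m ^ 2 * exp (-(‖ξ‖ ^ 2) * t) := by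
  set M := ∫ x, (1 + ‖x‖ ^ θ) * |u x| ∂μ
  set a := ‖ξ‖ ^ θ
  have hA := abs_integral_comp_inner_mul_le hθ₀.le
    (abs_cos_sub_one_le_two_mul_abs_rpow hθ₀ hθ₁) hu ξ
  have hB := abs_integral_comp_inner_mul_le hθ₀.le
    (fun s => (abs_sin_le_abs_rpow hθ₀ hθ₁ s).trans_eq (one_mul _).symm) hu ξ
  have hsum : |∫ x, (cos (inner ℝ x ξ) - 1) * u x ∂μ| + |∫ x, sin (inner ℝ x ξ) * u x ∂μ| ≤
      3 * a * M := by linarith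
  have hb := mul_sq_rpow_div_two_le_sq_bF m hθ₀.le (norm_nonneg ξ) hξ
  refine div_le_of_le_mul₀ (sq_nonneg _) (by positivity) ?_
  calc _ ≤ (3 * a * M) ^ 2 * exp (-(‖ξ‖ ^ 2) * t) * 1 := by
        gcongr
        exact sin_sq_le_one _
    _ = 18 * M ^ 2 / m ^ 2 * exp (-(‖ξ‖ ^ 2) * t) * (m ^ 2 * a ^ 2 / 2) := by
        field_simp
        ring
    _ ≤ 18 * M ^ 2 / m ^ 2 * exp (-(‖ξ‖ ^ 2) * t) * bF m θ ‖ξ‖ ^ 2 := by gcongr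

end Oscillatory

section Gaussian

variable {V : Type*} [NormedAddCommGroup V] [InnerProductSpace ℝ V] [FiniteDimensional ℝ V]
  [MeasurableSpace V] [BorelSpace V]

lemma integral_exp_neg_sq_norm_mul {t : ℝ} (ht : 0 < t) :
    ∫ v : V, exp (-(‖v‖ ^ 2) * t) = (π / t) ^ (Module.finrank ℝ V / 2 : ℝ) := by
  rw [← GaussianFourier.integral_rexp_neg_mul_sq_norm ht]
  simp only [neg_mul, mul_comm t]

lemma integrable_exp_neg_sq_norm_mul {t : ℝ} (ht : 0 < t) :
    Integrable fun v : V => exp (-(‖v‖ ^ 2) * t) :=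
  .of_integral_ne_zero (by rw [integral_exp_neg_sq_norm_mul ht]; positivity)

end Gaussian

open MeasureTheory in
theorem stmt9_general (n : ℕ) (m θ : ℝ) (hm : 0 < m) (hθ1 : 0 < θ) (hθ2 : θ ≤ 1)
    (δ : ℝ) (hδ2 : 2 < δ)
    (u₁ : E n → ℝ)
    (hu₃ : Integrable (fun x => (1 + ‖x‖ ^ θ) * |u₁ x|)) :
    ∃ δ₀ : ℝ, 0 < δ₀ ∧ δ₀ < δ ∧ ∃ C : ℝ, 0 < C ∧
      ∀ t : ℝ, 1 ≤ t →
        (∫ ξ in {ξ : E n | ‖ξ‖ ≤ δ₀},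
            (|∫ x : E n, (Real.cos (inner ℝ x ξ : ℝ) - 1) * u₁ x| +
                |∫ x : E n, Real.sin (inner ℝ x ξ : ℝ) * u₁ x|) ^ 2 *
              Real.exp (-(‖ξ‖ ^ 2) * t) *
              Real.sin (t * bF m θ ‖ξ‖) ^ 2 / bF m θ ‖ξ‖ ^ 2) ≤
          C * m⁻¹ ^ 2 * (∫ x : E n, (1 + ‖x‖ ^ θ) * |u₁ x|) ^ 2 * t ^ (-(n : ℝ) / 2) := by
  refine ⟨1, one_pos, by linarith, 18 * π ^ ((n : ℝ) / 2), by positivity, fun t ht => ?_⟩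
  have ht₀ : 0 < t := one_pos.trans_le ht
  set M := ∫ x : E n, (1 + ‖x‖ ^ θ) * |u₁ x|
  have hball : MeasurableSet {ξ : E n | ‖ξ‖ ≤ 1} := measurableSet_le measurable_norm measurable_const
  have hgauss := (integrable_exp_neg_sq_norm_mul (V := E n) ht₀).const_mul (18 * M ^ 2 / m ^ 2)
  calc _ ≤ ∫ ξ in {ξ : E n | ‖ξ‖ ≤ 1}, 18 * M ^ 2 / m ^ 2 * exp (-(‖ξ‖ ^ 2) * t) :=
        integral_mono_of_nonneg (ae_of_all _ fun ξ => by positivity) hgauss.restrict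
          ((ae_restrict_iff' hball).2 <| ae_of_all _ fun ξ hξ =>
            lowFrequency_integrand_le hm hθ1 hθ2 hu₃ t hξ)
    _ ≤ ∫ ξ : E n, 18 * M ^ 2 / m ^ 2 * exp (-(‖ξ‖ ^ 2) * t) :=
        setIntegral_le_integral hgauss (ae_of_all _ fun ξ => by positivity)
    _ = 18 * M ^ 2 / m ^ 2 * (π / t) ^ ((n : ℝ) / 2) := by
        rw [integral_const_mul, integral_exp_neg_sq_norm_mul ht₀, finrank_euclideanSpace_fin]
    _ = _ := by
        rw [div_rpow pi_pos.le ht₀.le, neg_div, rpow_neg ht₀.le]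
        field_simp

open MeasureTheory in
/-- the `F₃`-estimate on the low frequency zone. -/
theorem stmt9 (n : ℕ) (hn : 1 ≤ n) (m θ : ℝ) (hm : 0 < m) (hθ1 : 0 < θ) (hθ2 : θ ≤ 1)
    (δ : ℝ) (hδ2 : 2 < δ)
    (hδneg : ∀ r : ℝ, 0 < r → r < δ →
      r ^ 4 - 4 * r ^ 2 - 4 * m ^ 2 * Real.log (1 + r ^ (2 * θ)) < 0)
    (hδpos : ∀ r : ℝ, δ ≤ r →
      0 ≤ r ^ 4 - 4 * r ^ 2 - 4 * m ^ 2 * Real.log (1 + r ^ (2 * θ)))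
    (u₁ : E n → ℝ) (hu₁ : Integrable u₁)
    (hu₃ : Integrable (fun x => (1 + ‖x‖ ^ θ) * |u₁ x|)) :
    ∃ δ₀ : ℝ, 0 < δ₀ ∧ δ₀ < δ ∧ ∃ C : ℝ, 0 < C ∧
      ∀ t : ℝ, 1 ≤ t →
        (∫ ξ in {ξ : E n | ‖ξ‖ ≤ δ₀},
            (|∫ x : E n, (Real.cos (inner ℝ x ξ : ℝ) - 1) * u₁ x| +
                |∫ x : E n, Real.sin (inner ℝ x ξ : ℝ) * u₁ x|) ^ 2 *
              Real.exp (-(‖ξ‖ ^ 2) * t) *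
              Real.sin (t * bF m θ ‖ξ‖) ^ 2 / bF m θ ‖ξ‖ ^ 2) ≤
          C * m⁻¹ ^ 2 * (∫ x : E n, (1 + ‖x‖ ^ θ) * |u₁ x|) ^ 2 * t ^ (-(n : ℝ) / 2) :=
  stmt9_general n m θ hm hθ1 hθ2 δ hδ2 u₁ hu₃

end
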